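/- Let C_n (n ≥ 3) be a cycle with nonnegative edge weights and minimum-weight edge e₁. If e₂ (second-smallest weight edge) is not adjacent to e₁, and e, f are the two edges adjacent to e₁ with w(e) ≤ w(f), then k(C_n, w) = min{ w(e₁) + w(e), w(e₂) }. -/

import Mathlib

open scoped Classical

variable {V E : Type*}

/-- The arc relation of a partial orientation `d`: there is an arc `u → v` if some
non-loop edge of `F` is directed from `u` to `v`. (Loops are never oriented/used.) -/
def arcRel (ends : E → Sym2 V) (F : Set E) (d : E → V × V) (u v : V) : Prop :=
  ∃ e ∈ F, ¬ (ends e).IsDiag ∧ d e = (u, v)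

/-- `d` is an orientation of the (non-loop) edges of `F`: the chosen direction of each
edge is compatible with its endpoints. -/
def IsOrientation (ends : E → Sym2 V) (F : Set E) (d : E → V × V) : Prop :=
  ∀ e ∈ F, ¬ (ends e).IsDiag → ends e = s((d e).1, (d e).2)

/-- The orientation `d` is acyclic: no directed cycle. -/
def AcyclicOn (ends : E → Sym2 V) (F : Set E) (d : E → V × V) : Prop :=
  ∀ v, ¬ Relation.TransGen (arcRel ends F d) v v

/-- `r` is the unique vertex of `S` with indegree `0` in the orientation `d`. -/
def RootedAt (ends : E → Sym2 V) (F : Set E) (S : Set V) (d : E → V × V) (r : V) : Prop :=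
  r ∈ S ∧ (∀ u, ¬ arcRel ends F d u r) ∧ ∀ v ∈ S, (∀ u, ¬ arcRel ends F d u v) → v = r

/-- `A` is (the edge set of) a spanning `r`-arborescence of the digraph obtained by
orienting the edges of `F` by `d`, spanning the vertex set `S`: every `v ∈ S`, `v ≠ r`,
has exactly one incoming edge of `A`, no edge of `A` enters `r`, and every vertex of `S`
is reachable from `r` along edges of `A`. -/
def IsArbM (ends : E → Sym2 V) (F : Set E) (S : Set V) (d : E → V × V) (r : V)
    (A : Set E) : Prop :=
  A ⊆ F ∧ (∀ e ∈ A, ¬ (ends e).IsDiag) ∧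
  (∀ v ∈ S, v ≠ r → ∃! e, e ∈ A ∧ (d e).2 = v) ∧
  (∀ e ∈ A, (d e).1 ∈ S ∧ (d e).2 ∈ S ∧ (d e).2 ≠ r) ∧
  (∀ v ∈ S, Relation.ReflTransGen (fun a b => ∃ e ∈ A, d e = (a, b)) r v)

/-- `kOn ends F S w r`: the maximum, over `r`-acyclic orientations `d` of the subgraph
with edges `F` and vertices `S`, of the maximum value of a weighted packing of spanning
`r`-arborescences subject to the capacities `w`. -/
noncomputable def kOn [Fintype E] (ends : E → Sym2 V) (F : Set E) (S : Set V)
    (w : E → ℝ) (r : V) : ℝ :=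
  sSup {x : ℝ | ∃ d : E → V × V, IsOrientation ends F d ∧ AcyclicOn ends F d ∧
    RootedAt ends F S d r ∧
    ∃ (t : ℕ) (lam : Fin t → ℝ) (A : Fin t → Set E),
      (∀ i, 0 ≤ lam i) ∧ (∀ i, IsArbM ends F S d r (A i)) ∧
      (∀ e ∈ F, ∑ i, (if e ∈ A i then lam i else 0) ≤ w e) ∧
      x = ∑ i, lam i}

/-- `kAll ends F S w`: the maximum of `kOn ends F S w r` over all roots `r ∈ S`. -/
noncomputable def kAll [Fintype E] (ends : E → Sym2 V) (F : Set E) (S : Set V)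
    (w : E → ℝ) : ℝ :=
  sSup ((fun r => kOn ends F S w r) '' S)

/-- The cycle `C_n`: vertex `i` is joined to `i + 1` (mod `n`) by edge `i`. -/
def cycEnds (n : ℕ) [NeZero n] : Fin n → Sym2 (Fin n) := fun i => s(i, i + 1)

open scoped Finset
open Fin.CommRing

/-! Fix an orientation of `C_n` rooted at `r`. A vertex `v ≠ r` entered by a single edge `g`
forces `g` into every spanning `r`-arborescence, so any packing has value at most `w g`.
Going around the cycle, the edges switch from backward to forward exactly at sources and from
forward to backward exactly at sinks, so there are as many sinks as sources, and `r` is the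
only source. Since `e₁` and `e₂` share no endpoint, one of their heads is not the sink, and
every packing has value at most `max (w e₁) (w e₂) = w e₂`. Conversely, reversing `e₁` alone
and rooting at `e₁ + 1`, the path `C_n - e₁` is an arborescence that can carry weight `w e₂`.
Finally `w e₂ ≤ w e ≤ w e₁ + w e`. -/

def packingValues [Fintype E] (ends : E → Sym2 V) (F : Set E) (S : Set V) (w : E → ℝ)
    (r : V) : Set ℝ :=
  {x : ℝ | ∃ d : E → V × V, IsOrientation ends F d ∧ AcyclicOn ends F d ∧
    RootedAt ends F S d r ∧
    ∃ (t : ℕ) (lam : Fin t → ℝ) (A : Fin t → Set E),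
      (∀ i, 0 ≤ lam i) ∧ (∀ i, IsArbM ends F S d r (A i)) ∧
      (∀ e ∈ F, ∑ i, (if e ∈ A i then lam i else 0) ≤ w e) ∧
      x = ∑ i, lam i}

theorem kOn_eq_sSup_packingValues [Fintype E] (ends : E → Sym2 V) (F : Set E) (S : Set V)
    (w : E → ℝ) (r : V) : kOn ends F S w r = sSup (packingValues ends F S w r) :=
  rfl

theorem sum_le_of_forall_mem {t : ℕ} {lam : Fin t → ℝ} {A : Fin t → Set E} {w : E → ℝ} {g : E}
    (hcap : ∑ i, (if g ∈ A i then lam i else 0) ≤ w g) (hg : ∀ i, g ∈ A i) :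
    ∑ i, lam i ≤ w g := by
  simpa [hg] using hcap

theorem card_filter_comp_and_not_eq {α : Type*} [Fintype α] (π : Equiv.Perm α)
    (p : α → Prop) : #{x | p (π x) ∧ ¬ p x} = #{x | ¬ p (π x) ∧ p x} := by
  have hπ : #{x | p (π x)} = #{x | p x} := Finset.card_equiv π (by simp)
  have h₁ : #{x | p (π x) ∧ p x} + #{x | p (π x) ∧ ¬ p x} = #{x | p (π x)} := by
    rw [← Finset.card_filter_add_card_filter_not (s := {x | p (π x)}) p, Finset.filter_filter,
      Finset.filter_filter]
  have h₂ : #{x | p (π x) ∧ p x} + #{x | ¬ p (π x) ∧ p x} = #{x | p x} := by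
    rw [← Finset.card_filter_add_card_filter_not (s := {x | p x}) (fun x => p (π x)),
      Finset.filter_filter, Finset.filter_filter]
    simp only [and_comm]
  omega

theorem Relation.reflTransGen_of_exists_lt {α : Type*} {R : α → α → Prop} (φ : α → ℕ) {r : α}
    (h : ∀ v ≠ r, ∃ u, φ u < φ v ∧ R u v) (v : α) : Relation.ReflTransGen R r v := by
  induction v using (measure φ).wf.induction with
  | _ v ih =>
    by_cases hv : v = r
    · exact hv ▸ .refl
    · obtain ⟨u, hu, huv⟩ := h v hv
      exact (ih u hu).tail huv

section Orientation

variable {ends : E → Sym2 V} {F : Set E} {S : Set V} {d : E → V × V} {r : V}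

theorem IsOrientation.snd_mem (hd : IsOrientation ends F d) {e : E} (he : e ∈ F)
    (hne : ¬ (ends e).IsDiag) : (d e).2 ∈ ends e := by
  rw [hd e he hne]
  exact Sym2.mem_mk_right _ _

theorem acyclicOn_of_lt {β : Type*} [Preorder β] (φ : V → β)
    (h : ∀ u v, arcRel ends F d u v → φ u < φ v) : AcyclicOn ends F d := fun v hv => by
  have := Relation.TransGen.lift φ h v v hv
  rw [Relation.transGen_eq_self] at this
  exact lt_irrefl _ this

theorem IsArbM.mem_of_forall_snd_eq {A : Set E} (hA : IsArbM ends F S d r A) {v : V}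
    (hv : v ∈ S) (hvr : v ≠ r) {g : E}
    (hg : ∀ e ∈ F, ¬ (ends e).IsDiag → (d e).2 = v → e = g) : g ∈ A := by
  obtain ⟨e, ⟨heA, hev⟩, -⟩ := hA.2.2.1 v hv hvr
  rwa [← hg e (hA.1 heA) (hA.2.1 e heA) hev]

end Orientation

theorem Fin.val_sub_one_lt_val {n : ℕ} [NeZero n] {x : Fin n} (hx : x ≠ 0) :
    (x - 1).val < x.val := by
  rw [Fin.val_sub_one_of_ne_zero hx]
  have := Fin.val_ne_zero_iff.mpr hx
  omega

section Cycle

variable {n : ℕ} [NeZero n]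

theorem mem_cycEnds_iff {v g : Fin n} : v ∈ cycEnds n g ↔ g = v ∨ g = v - 1 := by
  rw [cycEnds, Sym2.mem_iff, eq_comm, ← sub_eq_iff_eq_add, eq_comm (a := v - 1)]

theorem eq_root_of_source {d : Fin n → Fin n × Fin n} {r : Fin n}
    (hd : IsOrientation (cycEnds n) Set.univ d) (hr : RootedAt (cycEnds n) Set.univ Set.univ d r)
    {v : Fin n} (h₁ : (d (v - 1)).2 ≠ v) (h₂ : (d v).2 ≠ v) : v = r := by
  refine hr.2.2 v trivial fun u ⟨e, _, he, hev⟩ => ?_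
  have hhead : (d e).2 = v := by rw [hev]
  rcases mem_cycEnds_iff.1 (hhead ▸ hd.snd_mem trivial he) with rfl | rfl
  exacts [h₂ hhead, h₁ hhead]

def cycOrient (s i : Fin n) : Fin n × Fin n :=
  if i = s then (s + 1, s) else (i, i + 1)

variable {s : Fin n}

theorem cycOrient_self : cycOrient s s = (s + 1, s) := if_pos rfl

theorem cycOrient_of_ne {i : Fin n} (h : i ≠ s) : cycOrient s i = (i, i + 1) := if_neg h

theorem isOrientation_cycOrient (s : Fin n) : IsOrientation (cycEnds n) Set.univ (cycOrient s) := by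
  intro i _ _
  by_cases h : i = s
  · subst h
    rw [cycOrient_self]
    exact Sym2.eq_swap
  · rw [cycOrient_of_ne h]
    rfl

variable [Nontrivial (Fin n)]

theorem not_isDiag_cycEnds (g : Fin n) : ¬ (cycEnds n g).IsDiag := by
  simp [cycEnds]

-- `h g` is the head of edge `g`: a sink is entered by both of its edges `v - 1` and `v`,
-- a source by neither.
theorem card_sinks_eq_card_sources {h : Fin n → Fin n} (hh : ∀ g, h g ∈ cycEnds n g) :
    #{v | h (v - 1) = v ∧ h v = v} = #{v | h (v - 1) ≠ v ∧ h v ≠ v} := by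
  have hfwd (v : Fin n) : h (v - 1) = v ↔ h (v - 1) ≠ v - 1 := by
    rcases Sym2.mem_iff.1 (hh (v - 1)) with h' | h' <;> simp [h', eq_comm (a := v), sub_eq_self]
  convert card_filter_comp_and_not_eq (Equiv.subRight 1) (fun i => h i ≠ i) using 3 <;>
    simp only [Equiv.subRight_apply, hfwd, ne_eq, not_not]

section Upper

variable {d : Fin n → Fin n × Fin n} {r : Fin n}

theorem eq_of_sinks (hd : IsOrientation (cycEnds n) Set.univ d)
    (hr : RootedAt (cycEnds n) Set.univ Set.univ d r) {v₁ v₂ : Fin n}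
    (h₁ : (d (v₁ - 1)).2 = v₁ ∧ (d v₁).2 = v₁)
    (h₂ : (d (v₂ - 1)).2 = v₂ ∧ (d v₂).2 = v₂) : v₁ = v₂ := by
  have hsrc : #{v | (d (v - 1)).2 ≠ v ∧ (d v).2 ≠ v} ≤ 1 := Finset.card_le_one.2 fun a ha b hb => by
    simp only [Finset.mem_filter, Finset.mem_univ, true_and] at ha hb
    rw [eq_root_of_source hd hr ha.1 ha.2, eq_root_of_source hd hr hb.1 hb.2]
  rw [← card_sinks_eq_card_sources fun g => hd.snd_mem trivial (not_isDiag_cycEnds g)] at hsrc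
  exact Finset.card_le_one.1 hsrc _ (by simpa using h₁) _ (by simpa using h₂)

theorem sum_le_of_not_sink (hd : IsOrientation (cycEnds n) Set.univ d)
    (hr : RootedAt (cycEnds n) Set.univ Set.univ d r) {t : ℕ}
    {lam : Fin t → ℝ} {A : Fin t → Set (Fin n)}
    (harb : ∀ i, IsArbM (cycEnds n) Set.univ Set.univ d r (A i)) {w : Fin n → ℝ}
    (hcap : ∀ g ∈ Set.univ, ∑ i, (if g ∈ A i then lam i else 0) ≤ w g) {g v : Fin n}
    (hgv : (d g).2 = v) (hv : ¬ ((d (v - 1)).2 = v ∧ (d v).2 = v)) : ∑ i, lam i ≤ w g := by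
  have hvr : v ≠ r := fun h =>
    hr.2.1 (d g).1 ⟨g, trivial, not_isDiag_cycEnds g, by rw [← h, ← hgv]⟩
  refine sum_le_of_forall_mem (hcap g trivial) fun i =>
    (harb i).mem_of_forall_snd_eq trivial hvr fun e _ he hev => ?_
  by_contra hne
  rcases mem_cycEnds_iff.1 (hgv ▸ hd.snd_mem trivial (not_isDiag_cycEnds g)) with rfl | rfl <;>
    rcases mem_cycEnds_iff.1 (hev ▸ hd.snd_mem trivial he) with rfl | rfl
  exacts [hne rfl, hv ⟨hev, hgv⟩, hv ⟨hgv, hev⟩, hne rfl]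

end Upper

theorem le_or_le_of_mem_packingValues {w : Fin n → ℝ} {r : Fin n} {x : ℝ}
    (hx : x ∈ packingValues (cycEnds n) Set.univ Set.univ w r) {g₁ g₂ : Fin n}
    (hadj : ∀ v, ¬ (v ∈ cycEnds n g₁ ∧ v ∈ cycEnds n g₂)) : x ≤ w g₁ ∨ x ≤ w g₂ := by
  obtain ⟨d, hd, -, hr, t, lam, A, -, harb, hcap, rfl⟩ := hx
  by_contra! hlt
  have hsink (g : Fin n) (hg : w g < ∑ i, lam i) :
      (d ((d g).2 - 1)).2 = (d g).2 ∧ (d (d g).2).2 = (d g).2 := by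
    by_contra h
    exact hg.not_ge (sum_le_of_not_sink hd hr harb hcap rfl h)
  have heq := eq_of_sinks hd hr (hsink g₁ hlt.1) (hsink g₂ hlt.2)
  exact hadj _ ⟨hd.snd_mem trivial (not_isDiag_cycEnds g₁),
    heq ▸ hd.snd_mem trivial (not_isDiag_cycEnds g₂)⟩

theorem val_sub_lt_of_arcRel_cycOrient {u v : Fin n}
    (h : arcRel (cycEnds n) Set.univ (cycOrient s) u v) :
    (u - (s + 1)).val < (v - (s + 1)).val := by
  obtain ⟨g, -, -, hg⟩ := h
  by_cases hgs : g = s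
  · rw [hgs, cycOrient_self, Prod.mk.injEq] at hg
    obtain ⟨rfl, rfl⟩ := hg
    simp [Fin.pos_iff_ne_zero]
  · rw [cycOrient_of_ne hgs, Prod.mk.injEq] at hg
    obtain ⟨rfl, rfl⟩ := hg
    have hne : g + 1 - (s + 1) ≠ 0 := by simpa [sub_eq_zero] using hgs
    have := Fin.val_sub_one_lt_val hne
    rwa [show g + 1 - (s + 1) - 1 = g - (s + 1) by ring] at this

theorem acyclicOn_cycOrient (s : Fin n) : AcyclicOn (cycEnds n) Set.univ (cycOrient s) :=
  acyclicOn_of_lt _ fun _ _ => val_sub_lt_of_arcRel_cycOrient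

theorem arcRel_cycOrient_sub_one {v : Fin n} (hv : v ≠ s + 1) :
    arcRel (cycEnds n) Set.univ (cycOrient s) (v - 1) v := by
  refine ⟨v - 1, trivial, not_isDiag_cycEnds _, ?_⟩
  rw [cycOrient_of_ne (by simpa [sub_eq_iff_eq_add] using hv), sub_add_cancel]

theorem rootedAt_cycOrient (s : Fin n) :
    RootedAt (cycEnds n) Set.univ Set.univ (cycOrient s) (s + 1) := by
  refine ⟨trivial, fun u h => (val_sub_lt_of_arcRel_cycOrient h).not_ge (by simp), fun v _ hv => ?_⟩
  by_contra hvs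
  exact hv _ (arcRel_cycOrient_sub_one hvs)

theorem isArbM_cycOrient (s : Fin n) :
    IsArbM (cycEnds n) Set.univ Set.univ (cycOrient s) (s + 1) {g | g ≠ s} := by
  have hpred {v : Fin n} (hv : v ≠ s + 1) : v - 1 ≠ s := by simpa [sub_eq_iff_eq_add] using hv
  refine ⟨Set.subset_univ _, fun g _ => not_isDiag_cycEnds g, fun v _ hv => ?_,
    fun g hg => ⟨trivial, trivial, ?_⟩, fun v _ => ?_⟩
  · refine ⟨v - 1, ⟨hpred hv, by rw [cycOrient_of_ne (hpred hv), sub_add_cancel]⟩, ?_⟩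
    rintro g ⟨hg, hgv⟩
    rw [cycOrient_of_ne hg] at hgv
    exact eq_sub_of_add_eq hgv
  · rw [cycOrient_of_ne hg]
    simpa using hg
  · refine Relation.reflTransGen_of_exists_lt (fun v => (v - (s + 1)).val) (fun v hv => ?_) v
    exact ⟨v - 1, val_sub_lt_of_arcRel_cycOrient (arcRel_cycOrient_sub_one hv), v - 1, hpred hv,
      by rw [cycOrient_of_ne (hpred hv), sub_add_cancel]⟩

theorem mem_packingValues_cycOrient {w : Fin n → ℝ} {c : ℝ} (hc : 0 ≤ c) (hs : 0 ≤ w s)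
    (hw : ∀ g, g ≠ s → c ≤ w g) : c ∈ packingValues (cycEnds n) Set.univ Set.univ w (s + 1) := by
  refine ⟨cycOrient s, isOrientation_cycOrient s, acyclicOn_cycOrient s, rootedAt_cycOrient s,
    1, fun _ => c, fun _ => {g | g ≠ s}, fun _ => hc, fun _ => isArbM_cycOrient s,
    fun g _ => ?_, by simp⟩
  by_cases hg : g = s
  · simpa [hg] using hs
  · simpa [hg] using hw g hg

end Cycle

theorem stmt_10_general {n : ℕ} [NeZero n] (hn : 3 ≤ n) (w : Fin n → ℝ) (hw : ∀ g, 0 ≤ w g)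
    (e₁ e₂ : Fin n)
    (hmin1 : ∀ g, w e₁ ≤ w g) (hmin2 : ∀ g, g ≠ e₁ → w e₂ ≤ w g)
    (hnadj : ∀ x : Fin n, ¬ (x ∈ cycEnds n e₁ ∧ x ∈ cycEnds n e₂))
    (e : Fin n) (he1 : e ≠ e₁) :
    kAll (cycEnds n) Set.univ Set.univ w = min (w e₁ + w e) (w e₂) := by
  have : Nontrivial (Fin n) := Fin.nontrivial_iff_two_le.2 (by omega)
  rw [min_eq_right (by linarith [hmin2 e he1, hw e₁])]
  have hle (r : Fin n) : ∀ x ∈ packingValues (cycEnds n) Set.univ Set.univ w r, x ≤ w e₂ :=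
    fun x hx => (le_or_le_of_mem_packingValues hx hnadj).elim (fun h => h.trans (hmin1 e₂)) id
  have hkOn (r : Fin n) : kOn (cycEnds n) Set.univ Set.univ w r ≤ w e₂ := by
    rw [kOn_eq_sSup_packingValues]
    exact Real.sSup_le (hle r) (hw e₂)
  have hroot : kOn (cycEnds n) Set.univ Set.univ w (e₁ + 1) = w e₂ := by
    rw [kOn_eq_sSup_packingValues]
    exact IsGreatest.csSup_eq ⟨mem_packingValues_cycOrient (hw e₂) (hw e₁) hmin2, hle _⟩
  exact IsGreatest.csSup_eq ⟨⟨e₁ + 1, trivial, hroot⟩, by rintro _ ⟨r, -, rfl⟩; exact hkOn r⟩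

/-- In the cycle `C_n` (`n ≥ 3`) with nonnegative weights, if a
second-cheapest edge `e₂` is not adjacent to the cheapest edge `e₁`, and `e, f` are the
two edges adjacent to `e₁` with `w e ≤ w f`, then
`k(C_n, w) = min (w e₁ + w e) (w e₂)`. -/
theorem stmt_10 {n : ℕ} [NeZero n] (hn : 3 ≤ n) (w : Fin n → ℝ) (hw : ∀ g, 0 ≤ w g)
    (e₁ e₂ : Fin n) (h21 : e₂ ≠ e₁)
    (hmin1 : ∀ g, w e₁ ≤ w g) (hmin2 : ∀ g, g ≠ e₁ → w e₂ ≤ w g)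
    (hnadj : ∀ x : Fin n, ¬ (x ∈ cycEnds n e₁ ∧ x ∈ cycEnds n e₂))
    (e f : Fin n) (hef : e ≠ f) (he1 : e ≠ e₁) (hf1 : f ≠ e₁)
    (hadje : ∃ x : Fin n, x ∈ cycEnds n e ∧ x ∈ cycEnds n e₁)
    (hadjf : ∃ x : Fin n, x ∈ cycEnds n f ∧ x ∈ cycEnds n e₁)
    (hewf : w e ≤ w f) :
    kAll (cycEnds n) Set.univ Set.univ w = min (w e₁ + w e) (w e₂) :=
  stmt_10_general hn w hw e₁ e₂ hmin1 hmin2 hnadj e he1
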